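/- arXiv:1805.07571 — 8 statements merged into one kernel-verified Lean document; each statement's English description precedes it below -/
import Mathlib

section
/- Let k, f0, T0, m0, A1, A2, λ be real numbers with f0 ≠ 0, m0 ≠ 0 and m0·λ² = 4T0 − 2k³/f0³. Define EI(x) = k³x⁶/(8f0³), T(x) = T0·x² − 3k³x⁴/(4f0³) and m(x) = m0/x². Then the function u(x,t) = e^{−2/x}·(A1·e^{λt} + A2·e^{−λt}) satisfies the Euler–Bernoulli beam equation with axial load at every x > 0 and every t ∈ ℝ. (This is case (a.1) of Table 1, where λ = √2·√(2f0³T0 − k³)/(f0^{3/2}√m0), so that λ² = 2(2f0³T0 − k³)/(f0³m0).) -/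
/-!
Separating variables, `u = X(x)·H(t)` with `X = e^{-2/x}` and `H'' = λ²H`. Every spatial derivative
of `P(x)·e^{-2/x}` is again of this shape, with `P ↦ P' + 2P/x²`; with `EI = a x⁶` and
`T = b x² − 6a x⁴` this turns `(EI X'')'' − (T X')'` into `(16a − 4b)/x² · X`, and the time part
contributes `m λ² X = m0 λ²/x² · X`. Here `a = k³/(8f0³)`, so `16a = 2k³/f0³` and the relation
on `λ` makes the sum vanish.
-/

/-- The left-hand side of the Euler–Bernoulli beam equation with axial load:
`∂²/∂x²(EI(x)·u_xx) + m(x)·u_tt − ∂/∂x(T(x)·u_x)` evaluated at `(x, t)`. -/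
noncomputable def beamLHS (EI m T : ℝ → ℝ) (u : ℝ → ℝ → ℝ) (x t : ℝ) : ℝ :=
  deriv (deriv (fun y => EI y * deriv (deriv (fun z => u z t)) y)) x
    + m x * deriv (deriv (fun s => u x s)) t
    - deriv (fun y => T y * deriv (fun z => u z t) y) x

open Real Set

lemma beamLHS_mul (EI m T X H : ℝ → ℝ) (x t : ℝ) :
    beamLHS EI m T (fun x t => X x * H t) x t =
      (deriv (deriv fun y => EI y * deriv (deriv X) y) x - deriv (fun y => T y * deriv X y) x)
        * H t + m x * X x * deriv (deriv H) t := by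
  simp only [beamLHS, deriv_mul_const_field', deriv_const_mul_field', ← mul_assoc]
  ring

lemma hasDerivAt_exp_add_exp (A1 A2 lam s : ℝ) :
    HasDerivAt (fun s => A1 * exp (lam * s) + A2 * exp (-(lam * s)))
      (lam * A1 * exp (lam * s) + -lam * A2 * exp (-(lam * s))) s := by
  have hlin : HasDerivAt (fun s => lam * s) lam s := by
    simpa using (hasDerivAt_id s).const_mul lam
  refine ((hlin.exp.const_mul A1).add (hlin.neg.exp.const_mul A2)).congr_deriv ?_
  simp only [Pi.neg_apply]
  ring

lemma deriv_deriv_exp_add_exp (A1 A2 lam t : ℝ) :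
    deriv (deriv fun s => A1 * exp (lam * s) + A2 * exp (-(lam * s))) t
      = lam ^ 2 * (A1 * exp (lam * t) + A2 * exp (-(lam * t))) := by
  rw [funext fun s => (hasDerivAt_exp_add_exp A1 A2 lam s).deriv,
    (hasDerivAt_exp_add_exp _ _ lam t).deriv]
  ring

lemma hasDerivAt_exp_neg_two_div {x : ℝ} (hx : x ≠ 0) :
    HasDerivAt (fun y => exp (-2 / y)) (2 / x ^ 2 * exp (-2 / x)) x := by
  have h : HasDerivAt (fun y => -2 / y) (2 / x ^ 2) x :=
    ((hasDerivAt_inv hx).const_mul (-2)).congr_deriv (by field_simp)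
  simpa [mul_comm] using h.exp

lemma eqOn_deriv_mul_exp_neg_two_div {f P P' Q : ℝ → ℝ}
    (hf : EqOn f (fun y => P y * exp (-2 / y)) (Ioi 0))
    (hP : ∀ y > 0, HasDerivAt P (P' y) y)
    (hQ : ∀ y > 0, P' y + 2 * P y / y ^ 2 = Q y) :
    EqOn (deriv f) (fun y => Q y * exp (-2 / y)) (Ioi 0) := by
  intro y hy
  rw [hf.deriv isOpen_Ioi hy]
  refine ((hP y hy).mul (hasDerivAt_exp_neg_two_div hy.ne')).deriv.trans ?_
  dsimp only
  rw [← hQ y hy]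
  ring

lemma eqOn_deriv_deriv_exp_neg_two_div :
    EqOn (deriv (deriv fun y => exp (-2 / y))) (fun y => (4 / y ^ 4 - 4 / y ^ 3) * exp (-2 / y))
      (Ioi 0) := by
  refine eqOn_deriv_mul_exp_neg_two_div (P := fun y => 2 / y ^ 2) (P' := fun y => -4 / y ^ 3)
    (fun y hy => (hasDerivAt_exp_neg_two_div (ne_of_gt hy)).deriv) (fun y hy => ?_)
    (fun y hy => by field_simp; ring)
  refine (((hasDerivAt_pow 2 y).inv (pow_ne_zero 2 hy.ne')).const_mul 2).congr_deriv ?_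
  field_simp
  ring

lemma deriv_deriv_bending_moment (a : ℝ) {x : ℝ} (hx : 0 < x) :
    deriv (deriv fun y => a * y ^ 6 * deriv (deriv fun z => exp (-2 / z)) y) x
      = a * (16 / x ^ 2 - 24 * x - 24) * exp (-2 / x) := by
  have h0 : EqOn (fun y => a * y ^ 6 * deriv (deriv fun z => exp (-2 / z)) y)
      (fun y => a * (4 * y ^ 2 - 4 * y ^ 3) * exp (-2 / y)) (Ioi 0) := fun y hy => by
    have hy0 : y ≠ 0 := ne_of_gt hy
    dsimp only
    rw [eqOn_deriv_deriv_exp_neg_two_div hy]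
    field_simp
  have h1 := eqOn_deriv_mul_exp_neg_two_div h0 (P' := fun y => a * (8 * y - 12 * y ^ 2))
    (Q := fun y => a * (8 - 12 * y ^ 2))
    (fun y _ => ((((hasDerivAt_pow 2 y).const_mul 4).sub
      ((hasDerivAt_pow 3 y).const_mul 4)).const_mul a).congr_deriv (by push_cast; ring))
    (fun y hy => by field_simp; ring)
  have h2 := eqOn_deriv_mul_exp_neg_two_div h1 (P' := fun y => a * (-24 * y))
    (Q := fun y => a * (16 / y ^ 2 - 24 * y - 24))
    (fun y _ => (((hasDerivAt_const y 8).sub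
      ((hasDerivAt_pow 2 y).const_mul 12)).const_mul a).congr_deriv (by push_cast; ring))
    (fun y hy => by field_simp; ring)
  exact h2 hx

lemma deriv_axial_term (a b : ℝ) {x : ℝ} (hx : 0 < x) :
    deriv (fun y => (b * y ^ 2 + a * y ^ 4) * deriv (fun z => exp (-2 / z)) y) x
      = (4 * a * x + 4 * b / x ^ 2 + 4 * a) * exp (-2 / x) := by
  have h0 : EqOn (fun y => (b * y ^ 2 + a * y ^ 4) * deriv (fun z => exp (-2 / z)) y)
      (fun y => (2 * b + 2 * a * y ^ 2) * exp (-2 / y)) (Ioi 0) := fun y hy => by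
    have hy0 : y ≠ 0 := ne_of_gt hy
    dsimp only
    rw [(hasDerivAt_exp_neg_two_div hy0).deriv]
    field_simp
  have h1 := eqOn_deriv_mul_exp_neg_two_div h0 (P' := fun y => 4 * a * y)
    (Q := fun y => 4 * a * y + 4 * b / y ^ 2 + 4 * a)
    (fun y _ => ((hasDerivAt_const y (2 * b)).add
      ((hasDerivAt_pow 2 y).const_mul (2 * a))).congr_deriv (by push_cast; ring))
    (fun y hy => by field_simp; ring)
  exact h1 hx

theorem beam_case_a1_solution_general (k f0 T0 m0 A1 A2 lam : ℝ)
    (hlam : m0 * lam ^ 2 = 4 * T0 - 2 * k ^ 3 / f0 ^ 3)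
    (EI T m : ℝ → ℝ) (u : ℝ → ℝ → ℝ)
    (hEI : ∀ x, EI x = k ^ 3 * x ^ 6 / (8 * f0 ^ 3))
    (hT : ∀ x, T x = T0 * x ^ 2 - 3 * k ^ 3 * x ^ 4 / (4 * f0 ^ 3))
    (hm : ∀ x, m x = m0 / x ^ 2)
    (hu : ∀ x t, u x t =
      Real.exp (-2 / x) * (A1 * Real.exp (lam * t) + A2 * Real.exp (-(lam * t)))) :
    ∀ x > (0 : ℝ), ∀ t : ℝ, beamLHS EI m T u x t = 0 := by
  intro x hx t
  obtain rfl : u = fun x t => exp (-2 / x) * (A1 * exp (lam * t) + A2 * exp (-(lam * t))) :=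
    funext fun x => funext (hu x)
  obtain rfl : EI = fun y => k ^ 3 / (8 * f0 ^ 3) * y ^ 6 := funext fun y => by rw [hEI]; ring
  obtain rfl : T = fun y => T0 * y ^ 2 + -6 * (k ^ 3 / (8 * f0 ^ 3)) * y ^ 4 :=
    funext fun y => by rw [hT]; ring
  rw [beamLHS_mul, deriv_deriv_bending_moment _ hx, deriv_axial_term _ _ hx, deriv_deriv_exp_add_exp, hm]
  linear_combination exp (-2 / x) * (A1 * exp (lam * t) + A2 * exp (-(lam * t))) / x ^ 2 * hlam

/-- Case (a.1) of Table 1: with `EI(x) = k³x⁶/(8f0³)`, `T(x) = T0·x² − 3k³x⁴/(4f0³)`,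
`m(x) = m0/x²`, and `m0·λ² = 4T0 − 2k³/f0³`, the function
`u(x,t) = e^{−2/x}·(A1·e^{λt} + A2·e^{−λt})` satisfies the axially loaded
Euler–Bernoulli beam equation for all `x > 0` and all `t`. -/
theorem beam_case_a1_solution (k f0 T0 m0 A1 A2 lam : ℝ)
    (hf0 : f0 ≠ 0) (hm0 : m0 ≠ 0)
    (hlam : m0 * lam ^ 2 = 4 * T0 - 2 * k ^ 3 / f0 ^ 3)
    (EI T m : ℝ → ℝ) (u : ℝ → ℝ → ℝ)
    (hEI : ∀ x, EI x = k ^ 3 * x ^ 6 / (8 * f0 ^ 3))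
    (hT : ∀ x, T x = T0 * x ^ 2 - 3 * k ^ 3 * x ^ 4 / (4 * f0 ^ 3))
    (hm : ∀ x, m x = m0 / x ^ 2)
    (hu : ∀ x t, u x t =
      Real.exp (-2 / x) * (A1 * Real.exp (lam * t) + A2 * Real.exp (-(lam * t)))) :
    ∀ x > (0 : ℝ), ∀ t : ℝ, beamLHS EI m T u x t = 0 :=
  beam_case_a1_solution_general k f0 T0 m0 A1 A2 lam hlam EI T m u hEI hT hm hu
end

section
/- Let k, f0, T0, m0 be real numbers with f0 ≠ 0 and m0 ≠ 0, and define EI(x) = k³x⁶/(8f0³), T(x) = T0·x² − 3k³x⁴/(4f0³) and m(x) = m0/x². Let F: ℝ → ℝ be twice differentiable. Then u(x,t) = e^{−2/x}·F(t) satisfies the Euler–Bernoulli beam equation with axial load at every x > 0 and t ∈ ℝ if and only if m0·F''(t) = (4T0 − 2k³/f0³)·F(t) for all t ∈ ℝ. (This is the reduction of the PDE to a second-order ODE for F obtained from the similarity ansatz of case (a.1).) -/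
/-!
For `u = X(x)·F(t)` every `x`-derivative in the beam operator acts on `X` alone, so the operator
splits as (spatial operator applied to `X`)·`F` + `m·X·F''`. For `X = e^{a/x}` each derivative of
`p(x)·e^{a/x}` is again of this form, namely `(p' − a p/x²)·e^{a/x}`. With `a = −2`, `c = k³/f0³`
and the given `EI`, `T`, the polynomial parts cancel down to `(2c − 4T0)/x²`, so the whole left-hand
side equals `e^{−2/x}/x² · (m0 F'' − (4T0 − 2c) F)`, whose prefactor never vanishes.
-/

open Real

theorem beamLHS_separated (EI m T X F : ℝ → ℝ) (x t : ℝ) :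
    beamLHS EI m T (fun x t => X x * F t) x t =
      (deriv (deriv fun y => EI y * deriv (deriv X) y) x - deriv (fun y => T y * deriv X y) x)
        * F t + m x * X x * deriv (deriv F) t := by
  simp only [beamLHS, deriv_mul_const_field', deriv_const_mul_field', ← mul_assoc]
  ring

theorem hasDerivAt_exp_div (a : ℝ) {y : ℝ} (hy : y ≠ 0) :
    HasDerivAt (fun z => exp (a / z)) (-a / y ^ 2 * exp (a / y)) y := by
  have hdiv : HasDerivAt (fun z => a / z) (-a / y ^ 2) y := by
    simpa only [div_eq_mul_inv, neg_mul, mul_neg] using (hasDerivAt_inv hy).const_mul a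
  exact hdiv.exp.congr_deriv (mul_comm _ _)

theorem deriv_mul_exp_div {f p : ℝ → ℝ} {p' a y : ℝ} (hf : ∀ z ≠ 0, f z = p z * exp (a / z))
    (hy : y ≠ 0) (hp : HasDerivAt p p' y) :
    deriv f y = (p' - a / y ^ 2 * p y) * exp (a / y) := by
  have hfp : f =ᶠ[nhds y] fun z => p z * exp (a / z) :=
    (eventually_ne_nhds hy).mono hf
  rw [hfp.deriv_eq]
  exact (hp.mul (hasDerivAt_exp_div a hy)).deriv.trans (by ring)

theorem deriv_exp_div (a : ℝ) {y : ℝ} (hy : y ≠ 0) :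
    deriv (fun z => exp (a / z)) y = -a / y ^ 2 * exp (a / y) :=
  (hasDerivAt_exp_div a hy).deriv

theorem deriv_deriv_exp_div (a : ℝ) {y : ℝ} (hy : y ≠ 0) :
    deriv (deriv fun z => exp (a / z)) y = (a ^ 2 / y ^ 4 + 2 * a / y ^ 3) * exp (a / y) := by
  have hp : HasDerivAt (fun z => -a * (z ^ 2)⁻¹) (-a * (-(2 * y ^ 1) / (y ^ 2) ^ 2)) y :=
    ((hasDerivAt_pow 2 y).inv (pow_ne_zero 2 hy)).const_mul (-a)
  rw [deriv_mul_exp_div (fun z hz => (deriv_exp_div a hz).trans (by ring)) hy hp]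
  field_simp
  ring

theorem deriv_deriv_bending_exp_neg_two_div (c : ℝ) {x : ℝ} (hx : x ≠ 0) :
    deriv (deriv fun y => c / 8 * y ^ 6 * deriv (deriv fun z => exp (-2 / z)) y) x =
      (2 * c / x ^ 2 - 3 * c * x - 3 * c) * exp (-2 / x) := by
  have hmoment : ∀ y ≠ 0, c / 8 * y ^ 6 * deriv (deriv fun z => exp (-2 / z)) y =
      (c / 2 * y ^ 2 - c / 2 * y ^ 3) * exp (-2 / y) := fun y hy => by
    rw [deriv_deriv_exp_div _ hy]
    field_simp
    ring
  have hshear : ∀ y ≠ 0, deriv (fun y => c / 8 * y ^ 6 * deriv (deriv fun z => exp (-2 / z)) y) y =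
      (c - 3 * c / 2 * y ^ 2) * exp (-2 / y) := fun y hy => by
    rw [deriv_mul_exp_div hmoment hy
      (((hasDerivAt_pow 2 y).const_mul _).sub ((hasDerivAt_pow 3 y).const_mul _))]
    field_simp
    ring
  rw [deriv_mul_exp_div hshear hx ((hasDerivAt_const x c).sub ((hasDerivAt_pow 2 x).const_mul _))]
  field_simp
  ring

theorem deriv_axial_exp_neg_two_div (c T0 : ℝ) {x : ℝ} (hx : x ≠ 0) :
    deriv (fun y => (T0 * y ^ 2 - 3 * c / 4 * y ^ 4) * deriv (fun z => exp (-2 / z)) y) x =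
      (4 * T0 / x ^ 2 - 3 * c * x - 3 * c) * exp (-2 / x) := by
  have hforce : ∀ y ≠ 0, (T0 * y ^ 2 - 3 * c / 4 * y ^ 4) * deriv (fun z => exp (-2 / z)) y =
      (2 * T0 - 3 * c / 2 * y ^ 2) * exp (-2 / y) := fun y hy => by
    rw [deriv_exp_div _ hy]
    field_simp
    ring
  rw [deriv_mul_exp_div hforce hx ((hasDerivAt_const x _).sub ((hasDerivAt_pow 2 x).const_mul _))]
  field_simp
  ring

theorem beamLHS_exp_neg_two_div_mul (c T0 m0 : ℝ) (F : ℝ → ℝ) {x : ℝ} (hx : x ≠ 0) (t : ℝ) :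
    beamLHS (fun y => c / 8 * y ^ 6) (fun y => m0 / y ^ 2) (fun y => T0 * y ^ 2 - 3 * c / 4 * y ^ 4)
        (fun x t => exp (-2 / x) * F t) x t =
      exp (-2 / x) / x ^ 2 * (m0 * deriv (deriv F) t - (4 * T0 - 2 * c) * F t) := by
  rw [beamLHS_separated, deriv_deriv_bending_exp_neg_two_div c hx,
    deriv_axial_exp_neg_two_div c T0 hx]
  ring

theorem beam_case_a1_reduction_general (k f0 T0 m0 : ℝ)
    (EI T m : ℝ → ℝ) (u : ℝ → ℝ → ℝ) (F : ℝ → ℝ)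
    (hEI : ∀ x, EI x = k ^ 3 * x ^ 6 / (8 * f0 ^ 3))
    (hT : ∀ x, T x = T0 * x ^ 2 - 3 * k ^ 3 * x ^ 4 / (4 * f0 ^ 3))
    (hm : ∀ x, m x = m0 / x ^ 2)
    (hu : ∀ x t, u x t = Real.exp (-2 / x) * F t) :
    (∀ x > (0 : ℝ), ∀ t : ℝ, beamLHS EI m T u x t = 0) ↔
      (∀ t : ℝ, m0 * deriv (deriv F) t = (4 * T0 - 2 * k ^ 3 / f0 ^ 3) * F t) := by
  obtain rfl : EI = fun y => k ^ 3 / f0 ^ 3 / 8 * y ^ 6 := funext fun y => (hEI y).trans (by ring)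
  obtain rfl : T = fun y => T0 * y ^ 2 - 3 * (k ^ 3 / f0 ^ 3) / 4 * y ^ 4 :=
    funext fun y => (hT y).trans (by ring)
  obtain rfl : m = fun y => m0 / y ^ 2 := funext hm
  obtain rfl : u = fun x t => exp (-2 / x) * F t := funext fun x => funext (hu x)
  constructor
  · intro h t
    have h1 := h 1 one_pos t
    rw [beamLHS_exp_neg_two_div_mul _ _ _ _ one_ne_zero, mul_eq_zero, sub_eq_zero] at h1
    rw [h1.resolve_left (by positivity)]
    ring
  · intro h x hx t
    rw [beamLHS_exp_neg_two_div_mul _ _ _ _ hx.ne', h t]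
    ring

/-- Reduction of the beam PDE to an ODE via the similarity ansatz of case (a.1):
with `EI(x) = k³x⁶/(8f0³)`, `T(x) = T0·x² − 3k³x⁴/(4f0³)`, `m(x) = m0/x²`, and `F`
twice differentiable, `u(x,t) = e^{−2/x}·F(t)` satisfies the beam equation for all
`x > 0`, `t ∈ ℝ` iff `m0·F''(t) = (4T0 − 2k³/f0³)·F(t)` for all `t`. -/
theorem beam_case_a1_reduction (k f0 T0 m0 : ℝ) (hf0 : f0 ≠ 0) (hm0 : m0 ≠ 0)
    (EI T m : ℝ → ℝ) (u : ℝ → ℝ → ℝ) (F : ℝ → ℝ)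
    (hF : Differentiable ℝ F) (hF' : Differentiable ℝ (deriv F))
    (hEI : ∀ x, EI x = k ^ 3 * x ^ 6 / (8 * f0 ^ 3))
    (hT : ∀ x, T x = T0 * x ^ 2 - 3 * k ^ 3 * x ^ 4 / (4 * f0 ^ 3))
    (hm : ∀ x, m x = m0 / x ^ 2)
    (hu : ∀ x t, u x t = Real.exp (-2 / x) * F t) :
    (∀ x > (0 : ℝ), ∀ t : ℝ, beamLHS EI m T u x t = 0) ↔
      (∀ t : ℝ, m0 * deriv (deriv F) t = (4 * T0 - 2 * k ^ 3 / f0 ^ 3) * F t) :=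
  beam_case_a1_reduction_general k f0 T0 m0 EI T m u F hEI hT hm hu
end

section
/- Let a0 ≠ 0, a1 ≠ 0 be real, let m: ℝ → ℝ be any continuous function, and define EI(x) = a1·e^{a0·x} and T(x) = −(2/9)·a0²·a1·e^{a0·x}. Let s, A1, A2 be real with (A1, A2) ≠ (0,0). Then u(x,t) = e^{s·x}·(A1 + A2·t) satisfies the Euler–Bernoulli beam equation with axial load at every (x,t) ∈ ℝ² if and only if s·(s + a0)·(s + a0/3)·(s + 2a0/3) = 0. In particular, u(x,t) = e^{−a0·x/3}·(A1 + A2·t) is a solution (case (a.2) of Table 1). -/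
open Real

lemma deriv_exp_mul_mul_const (b c : ℝ) :
    deriv (fun y => exp (b * y) * c) = fun y => exp (b * y) * (c * b) := by
  funext y
  have h : HasDerivAt (fun z => exp (b * z)) (exp (b * y) * b) y := by
    simpa using ((hasDerivAt_id y).const_mul b).exp
  rw [(h.mul_const c).deriv]
  ring

theorem beamLHS_exp_mul_affine (p q a : ℝ) (m : ℝ → ℝ) (s A1 A2 x t : ℝ) :
    beamLHS (fun y => p * exp (a * y)) m (fun y => q * exp (a * y))
        (fun x t => exp (s * x) * (A1 + A2 * t)) x t
      = exp ((a + s) * x) * (A1 + A2 * t) * (s * (s + a) * (p * s * (s + a) - q)) := by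
  have exp_mul_exp (k r y : ℝ) :
      k * exp (a * y) * (exp (s * y) * r) = exp ((a + s) * y) * (k * r) := by
    rw [add_mul, exp_add]; ring
  have time_part : deriv (deriv fun τ => exp (s * x) * (A1 + A2 * τ)) t = 0 := by
    simp
  unfold beamLHS
  simp_rw [deriv_exp_mul_mul_const, exp_mul_exp, deriv_exp_mul_mul_const, time_part]
  ring

lemma exists_const_add_mul_ne_zero {A1 A2 : ℝ} (hA : (A1, A2) ≠ (0, 0)) :
    ∃ t, A1 + A2 * t ≠ 0 := by
  by_cases hA2 : A2 = 0
  · exact ⟨0, fun h => hA (by simp_all)⟩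
  · exact ⟨(1 - A1) / A2, by field_simp; norm_num⟩

theorem beam_case_a2_general (a0 a1 : ℝ) (ha1 : a1 ≠ 0)
    (m : ℝ → ℝ) (EI T : ℝ → ℝ)
    (hEI : ∀ x, EI x = a1 * Real.exp (a0 * x))
    (hT : ∀ x, T x = -(2 / 9) * a0 ^ 2 * a1 * Real.exp (a0 * x))
    (s A1 A2 : ℝ) (hA : (A1, A2) ≠ (0, 0)) :
    ((∀ x t : ℝ,
        beamLHS EI m T (fun x t => Real.exp (s * x) * (A1 + A2 * t)) x t = 0) ↔
      s * (s + a0) * (s + a0 / 3) * (s + 2 * a0 / 3) = 0)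
    ∧ (∀ x t : ℝ,
        beamLHS EI m T (fun x t => Real.exp (-a0 * x / 3) * (A1 + A2 * t)) x t = 0) := by
  obtain rfl : EI = _ := funext hEI
  obtain rfl : T = _ := funext hT
  have beamLHS_eq (s x t : ℝ) :
      beamLHS (fun y => a1 * exp (a0 * y)) m (fun y => -(2 / 9) * a0 ^ 2 * a1 * exp (a0 * y))
          (fun x t => exp (s * x) * (A1 + A2 * t)) x t
        = exp ((a0 + s) * x) * (A1 + A2 * t)
          * (a1 * (s * (s + a0) * (s + a0 / 3) * (s + 2 * a0 / 3))) := by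
    rw [beamLHS_exp_mul_affine]
    ring
  refine ⟨⟨fun h => ?_, fun h x t => by rw [beamLHS_eq, h, mul_zero, mul_zero]⟩, fun x t => ?_⟩
  · obtain ⟨t, ht⟩ := exists_const_add_mul_ne_zero hA
    have h0 := h 0 t
    rw [beamLHS_eq] at h0
    simpa [ht, ha1] using h0
  · simp_rw [show ∀ x, -a0 * x / 3 = -a0 / 3 * x from fun x => by ring]
    rw [beamLHS_eq]
    ring

/-- Case (a.2) of Table 1: with `EI(x) = a1·e^{a0·x}`, `T(x) = −(2/9)·a0²·a1·e^{a0·x}`,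
and any continuous mass `m`, the function `u(x,t) = e^{s·x}·(A1 + A2·t)` (with
`(A1,A2) ≠ (0,0)`) solves the beam equation everywhere iff
`s·(s + a0)·(s + a0/3)·(s + 2a0/3) = 0`; in particular
`u(x,t) = e^{−a0·x/3}·(A1 + A2·t)` is a solution. -/
theorem beam_case_a2 (a0 a1 : ℝ) (ha0 : a0 ≠ 0) (ha1 : a1 ≠ 0)
    (m : ℝ → ℝ) (hm : Continuous m) (EI T : ℝ → ℝ)
    (hEI : ∀ x, EI x = a1 * Real.exp (a0 * x))
    (hT : ∀ x, T x = -(2 / 9) * a0 ^ 2 * a1 * Real.exp (a0 * x))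
    (s A1 A2 : ℝ) (hA : (A1, A2) ≠ (0, 0)) :
    ((∀ x t : ℝ,
        beamLHS EI m T (fun x t => Real.exp (s * x) * (A1 + A2 * t)) x t = 0) ↔
      s * (s + a0) * (s + a0 / 3) * (s + 2 * a0 / 3) = 0)
    ∧ (∀ x t : ℝ,
        beamLHS EI m T (fun x t => Real.exp (-a0 * x / 3) * (A1 + A2 * t)) x t = 0) :=
  beam_case_a2_general a0 a1 ha1 m EI T hEI hT s A1 A2 hA
end

section
/- Let v ≠ 0 and a1 be real numbers, let m: ℝ → ℝ be any continuous function, and define EI(x) = a1·e^{−v·x} and T(x) = 2·a1·v²·e^{−v·x}. Then for all real constants A1, A2, the function u(x,t) = e^{2v·x}·(A1 + A2·t) satisfies the Euler–Bernoulli beam equation with axial load at every (x,t) ∈ ℝ². (This is case (b) of Table 1.) -/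
open Real

lemma deriv_const_mul_exp_mul (c k : ℝ) :
    deriv (fun x => c * exp (k * x)) = fun x => c * k * exp (k * x) := by
  ext x
  have h := (((hasDerivAt_id x).const_mul k).exp).const_mul c
  simp only [id, mul_one] at h
  rw [h.deriv]
  ring

lemma const_mul_exp_mul_const_mul_exp (a b k l : ℝ) :
    (fun x => a * exp (k * x) * (b * exp (l * x))) = fun x => a * b * exp ((k + l) * x) := by
  ext x
  rw [add_mul, exp_add]
  ring

lemma deriv_deriv_const_mul_affine (c a b : ℝ) :
    deriv (deriv fun s => c * (a + b * s)) = 0 := by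
  have h : deriv (fun s => c * (a + b * s)) = fun _ => c * b := by
    ext s
    exact ((((hasDerivAt_id s).const_mul b).const_add a).const_mul c).deriv.trans (by simp)
  rw [h, deriv_const']
  rfl

theorem beam_case_b_solution_general (v a1 : ℝ)
    (m : ℝ → ℝ) (EI T : ℝ → ℝ) (u : ℝ → ℝ → ℝ)
    (hEI : ∀ x, EI x = a1 * Real.exp (-v * x))
    (hT : ∀ x, T x = 2 * a1 * v ^ 2 * Real.exp (-v * x))
    (A1 A2 : ℝ)
    (hu : ∀ x t, u x t = Real.exp (2 * v * x) * (A1 + A2 * t)) :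
    ∀ x t : ℝ, beamLHS EI m T u x t = 0 := by
  intro x t
  set c := A1 + A2 * t
  have hprofile : (fun z => u z t) = fun z => c * exp (2 * v * z) := by
    ext z
    rw [hu, mul_comm]
  have htime : deriv (deriv fun s => u x s) t = 0 := by
    simp only [hu, deriv_deriv_const_mul_affine, Pi.zero_apply]
  have hbending : (fun y => EI y * deriv (deriv fun z => u z t) y)
      = fun y => a1 * (c * (2 * v) * (2 * v)) * exp ((-v + 2 * v) * y) := by
    simp only [funext hEI, hprofile, deriv_const_mul_exp_mul,
      const_mul_exp_mul_const_mul_exp]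
  have haxial : (fun y => T y * deriv (fun z => u z t) y)
      = fun y => 2 * a1 * v ^ 2 * (c * (2 * v)) * exp ((-v + 2 * v) * y) := by
    simp only [funext hT, hprofile, deriv_const_mul_exp_mul,
      const_mul_exp_mul_const_mul_exp]
  rw [beamLHS, hbending, haxial, htime, deriv_const_mul_exp_mul, deriv_const_mul_exp_mul,
    deriv_const_mul_exp_mul]
  ring

/-- Case (b) of Table 1: with `EI(x) = a1·e^{−v·x}`, `T(x) = 2·a1·v²·e^{−v·x}`, and
any continuous mass `m`, the function `u(x,t) = e^{2v·x}·(A1 + A2·t)` satisfies the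
axially loaded Euler–Bernoulli beam equation at every `(x,t) ∈ ℝ²`. -/
theorem beam_case_b_solution (v a1 : ℝ) (hv : v ≠ 0)
    (m : ℝ → ℝ) (hm : Continuous m) (EI T : ℝ → ℝ) (u : ℝ → ℝ → ℝ)
    (hEI : ∀ x, EI x = a1 * Real.exp (-v * x))
    (hT : ∀ x, T x = 2 * a1 * v ^ 2 * Real.exp (-v * x))
    (A1 A2 : ℝ)
    (hu : ∀ x t, u x t = Real.exp (2 * v * x) * (A1 + A2 * t)) :
    ∀ x t : ℝ, beamLHS EI m T u x t = 0 :=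
  beam_case_b_solution_general v a1 m EI T u hEI hT A1 A2 hu
end

section
/- Let a0, a1, T1, n, q be real numbers with a1 ≠ 0 and n ≠ 2, and define EI(x) = (a0 + a1·x)^n and T(x) = T1·(a0 + a1·x)^{n−2}/(a1·(n−2)) on the domain D = {x ∈ ℝ : a0 + a1·x > 0}. Then the power function w(x) = (a0 + a1·x)^q satisfies the static beam equation (EI(x)·w''(x))'' − (T(x)·w'(x))' = 0 on D if and only if q·(n + q − 3)·(a1³·(n−2)·(q−1)·(n + q − 2) − T1) = 0. -/
/-!
On `D = {a0 + a1 x > 0}` every function occurring in the operator is a constant multiple of a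
real power of `u = a0 + a1 x`, and differentiating `c u^p` on the open set `D` gives
`c p a1 u^(p-1)`. Hence the operator applied to `u^q` is `a1/(n-2) · P · u^(n+q-4)`, with `P` the
polynomial of the statement, and since `u` takes the value `1` on `D` it vanishes on `D` iff `P = 0`.
-/

open Set

/-- The static beam operator `w ↦ (EI·w'')'' − (T·w')'` evaluated at `x`. -/
noncomputable def staticBeamLHS (EI T : ℝ → ℝ) (w : ℝ → ℝ) (x : ℝ) : ℝ :=
  deriv (deriv (fun y => EI y * deriv (deriv w) y)) x
    - deriv (fun y => T y * deriv w y) x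

section AffinePower

variable {a0 a1 : ℝ}

lemma hasDerivAt_const_mul_affine_rpow (c p : ℝ) {x : ℝ} (hx : 0 < a0 + a1 * x) :
    HasDerivAt (fun y => c * (a0 + a1 * y) ^ p) (c * p * a1 * (a0 + a1 * x) ^ (p - 1)) x := by
  have hu : HasDerivAt (fun y => a0 + a1 * y) a1 x := by
    simpa using ((hasDerivAt_id x).const_mul a1).const_add a0
  exact ((hu.rpow_const (p := p) (Or.inl hx.ne')).const_mul c).congr_deriv (by ring)

lemma eqOn_deriv_of_eqOn_const_mul_affine_rpow {f : ℝ → ℝ} {c p : ℝ}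
    (hf : EqOn f (fun y => c * (a0 + a1 * y) ^ p) {y | 0 < a0 + a1 * y}) :
    EqOn (deriv f) (fun y => c * p * a1 * (a0 + a1 * y) ^ (p - 1)) {y | 0 < a0 + a1 * y} := by
  intro x hx
  have hD : IsOpen {y : ℝ | 0 < a0 + a1 * y} := isOpen_lt continuous_const (by fun_prop)
  rw [(hf.eventuallyEq_of_mem (hD.mem_nhds hx)).deriv_eq]
  exact (hasDerivAt_const_mul_affine_rpow c p hx).deriv

theorem staticBeamLHS_affine_rpow (t n q : ℝ) {x : ℝ} (hx : 0 < a0 + a1 * x) :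
    staticBeamLHS (fun y => (a0 + a1 * y) ^ n) (fun y => t * (a0 + a1 * y) ^ (n - 2))
        (fun y => (a0 + a1 * y) ^ q) x
      = q * (n + q - 3) * a1 ^ 2 * (a1 ^ 2 * (q - 1) * (n + q - 2) - t)
          * (a0 + a1 * x) ^ (n + q - 4) := by
  have hw : EqOn (fun y => (a0 + a1 * y) ^ q) (fun y => 1 * (a0 + a1 * y) ^ q)
      {y | 0 < a0 + a1 * y} := fun y _ => (one_mul _).symm
  have hw' := eqOn_deriv_of_eqOn_const_mul_affine_rpow hw
  have hw'' := eqOn_deriv_of_eqOn_const_mul_affine_rpow hw'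
  have hEIw'' : EqOn (fun y => (a0 + a1 * y) ^ n * deriv (deriv fun y => (a0 + a1 * y) ^ q) y)
      (fun y => q * (q - 1) * a1 ^ 2 * (a0 + a1 * y) ^ (n + q - 2)) {y | 0 < a0 + a1 * y} := by
    intro y hy
    dsimp only
    rw [hw'' hy, show n + q - 2 = n + (q - 1 - 1) by ring, Real.rpow_add hy]
    ring
  have hTw' : EqOn (fun y => t * (a0 + a1 * y) ^ (n - 2) * deriv (fun y => (a0 + a1 * y) ^ q) y)
      (fun y => t * q * a1 * (a0 + a1 * y) ^ (n + q - 3)) {y | 0 < a0 + a1 * y} := by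
    intro y hy
    dsimp only
    rw [hw' hy, show n + q - 3 = n - 2 + (q - 1) by ring, Real.rpow_add hy]
    ring
  have hEIw''' := eqOn_deriv_of_eqOn_const_mul_affine_rpow hEIw''
  rw [staticBeamLHS, eqOn_deriv_of_eqOn_const_mul_affine_rpow hEIw''' hx,
    eqOn_deriv_of_eqOn_const_mul_affine_rpow hTw' hx,
    show n + q - 2 - 1 - 1 = n + q - 4 by ring, show n + q - 3 - 1 = n + q - 4 by ring]
  ring

end AffinePower

/-- With `EI(x) = (a0 + a1x)^n` and `T(x) = T1·(a0 + a1x)^{n−2}/(a1(n−2))` on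
`D = {x : a0 + a1x > 0}` (with `a1 ≠ 0`, `n ≠ 2`), the power function
`w(x) = (a0 + a1x)^q` satisfies the static beam equation on `D` iff
`q·(n + q − 3)·(a1³(n−2)(q−1)(n + q − 2) − T1) = 0`. -/
theorem static_beam_power_solutions (a0 a1 T1 n q : ℝ)
    (ha1 : a1 ≠ 0) (hn : n ≠ 2) :
    (∀ x : ℝ, a0 + a1 * x > 0 →
        staticBeamLHS (fun y => (a0 + a1 * y) ^ n)
          (fun y => T1 * (a0 + a1 * y) ^ (n - 2) / (a1 * (n - 2)))
          (fun y => (a0 + a1 * y) ^ q) x = 0) ↔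
      q * (n + q - 3) * (a1 ^ 3 * (n - 2) * (q - 1) * (n + q - 2) - T1) = 0 := by
  have hn2 : n - 2 ≠ 0 := sub_ne_zero.mpr hn
  set P := q * (n + q - 3) * (a1 ^ 3 * (n - 2) * (q - 1) * (n + q - 2) - T1)
  have hT : (fun y => T1 * (a0 + a1 * y) ^ (n - 2) / (a1 * (n - 2)))
      = fun y => T1 / (a1 * (n - 2)) * (a0 + a1 * y) ^ (n - 2) := by
    funext y; ring
  have hLHS : ∀ x, 0 < a0 + a1 * x →
      staticBeamLHS (fun y => (a0 + a1 * y) ^ n)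
          (fun y => T1 * (a0 + a1 * y) ^ (n - 2) / (a1 * (n - 2)))
          (fun y => (a0 + a1 * y) ^ q) x
        = a1 / (n - 2) * P * (a0 + a1 * x) ^ (n + q - 4) := by
    intro x hx
    rw [hT, staticBeamLHS_affine_rpow _ _ _ hx]
    field_simp
    ring
  refine ⟨fun h => ?_, fun h x hx => by rw [hLHS x hx, h, mul_zero, zero_mul]⟩
  have hx₁ : a0 + a1 * ((1 - a0) / a1) = 1 := by field_simp; ring
  have h₁ := h _ (by rw [hx₁]; exact one_pos)
  rw [hLHS _ (by rw [hx₁]; exact one_pos), hx₁, Real.one_rpow, mul_one] at h₁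
  exact (mul_eq_zero.mp h₁).resolve_left (div_ne_zero ha1 hn2)
end

section
/- Let a0 ∈ ℝ, a1 > 0, n > 3, and let T1 ∈ ℝ be such that Δ := a1³·(n−2)·(n−1)² + 4·T1 > 0. Set σ = √Δ/(a1^{3/2}·√(n−2)) and q± = (3 − n ± σ)/2. Define EI(x) = (a0 + a1·x)^n and T(x) = T1·(a0 + a1·x)^{n−2}/(a1·(n−2)), and let m be any continuous function. Then for all real constants c1, c2, c3, the function u(x,t) = 2t + c1·(a0 + a1·x)^{q+} + c2·(a0 + a1·x)^{q−} + c3·(a0 + a1·x)^{3−n} satisfies the Euler–Bernoulli beam equation with axial load at every x with a0 + a1·x > 0 and every t ∈ ℝ. (This is case (c) of Table 1, whose solution is u(x,t) = 2t + G(x) with G given by equation (22) of the paper.) -/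
open Filter Topology

noncomputable def affinePowSum {ι : Type*} [Fintype ι] (a0 a1 : ℝ) (k q : ι → ℝ) (y : ℝ) : ℝ :=
  ∑ i, k i * (a0 + a1 * y) ^ q i

noncomputable def beamSpatialOp (EI T G : ℝ → ℝ) (x : ℝ) : ℝ :=
  deriv (deriv (fun y => EI y * deriv (deriv G) y)) x - deriv (fun y => T y * deriv G y) x

def beamIndicial (a1 n τ q : ℝ) : ℝ :=
  a1 ^ 2 * q * (n + q - 3) * (a1 ^ 2 * (q - 1) * (n + q - 2) - τ)

theorem beamLHS_add_linear_time (EI m T G : ℝ → ℝ) (c x t : ℝ) :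
    beamLHS EI m T (fun y s => c * s + G y) x t = beamSpatialOp EI T G x := by
  simp [beamLHS, beamSpatialOp]

theorem eventually_affine_pos {a0 a1 x : ℝ} (hx : 0 < a0 + a1 * x) :
    ∀ᶠ y in 𝓝 x, 0 < a0 + a1 * y :=
  (continuous_const.add (continuous_const.mul continuous_id)).continuousAt.eventually
    (eventually_gt_nhds hx)

section affinePowSum

variable {ι : Type*} [Fintype ι] {a0 a1 x : ℝ}

theorem hasDerivAt_affinePowSum (k q : ι → ℝ) (hx : 0 < a0 + a1 * x) :
    HasDerivAt (affinePowSum a0 a1 k q)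
      (affinePowSum a0 a1 (fun i => a1 * q i * k i) (fun i => q i - 1) x) x := by
  have hℓ : HasDerivAt (fun y => a0 + a1 * y) a1 x := by
    simpa using ((hasDerivAt_id x).const_mul a1).const_add a0
  have := HasDerivAt.fun_sum (u := Finset.univ) fun i _ =>
    (hℓ.rpow_const (p := q i) (Or.inl hx.ne')).const_mul (k i)
  refine this.congr_deriv (Finset.sum_congr rfl fun i _ => ?_)
  ring

theorem deriv_affinePowSum_eventuallyEq (k q : ι → ℝ) (hx : 0 < a0 + a1 * x) :
    deriv (affinePowSum a0 a1 k q)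
      =ᶠ[𝓝 x] affinePowSum a0 a1 (fun i => a1 * q i * k i) (fun i => q i - 1) :=
  (eventually_affine_pos hx).mono fun _ hy => (hasDerivAt_affinePowSum k q hy).deriv

theorem const_mul_rpow_mul_affinePowSum_eventuallyEq (c p : ℝ) {f : ℝ → ℝ} (k q : ι → ℝ)
    (hx : 0 < a0 + a1 * x) (hf : f =ᶠ[𝓝 x] affinePowSum a0 a1 k q) :
    (fun y => c * (a0 + a1 * y) ^ p * f y)
      =ᶠ[𝓝 x] affinePowSum a0 a1 (fun i => c * k i) (fun i => p + q i) := by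
  filter_upwards [eventually_affine_pos hx, hf] with y hy hfy
  simp only [hfy, affinePowSum, Finset.mul_sum, Real.rpow_add hy]
  exact Finset.sum_congr rfl fun i _ => by ring

theorem beamSpatialOp_affinePowSum (n τ : ℝ) (k q : ι → ℝ) (hx : 0 < a0 + a1 * x) :
    beamSpatialOp (fun y => (a0 + a1 * y) ^ n) (fun y => τ * (a0 + a1 * y) ^ (n - 2))
        (affinePowSum a0 a1 k q) x
      = affinePowSum a0 a1 (fun i => beamIndicial a1 n τ (q i) * k i) (fun i => n + q i - 4) x := by
  have hG' := deriv_affinePowSum_eventuallyEq k q hx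
  have hG'' := hG'.deriv.trans (deriv_affinePowSum_eventuallyEq _ _ hx)
  have hbend := const_mul_rpow_mul_affinePowSum_eventuallyEq 1 n _ _ hx hG''
  have htens := const_mul_rpow_mul_affinePowSum_eventuallyEq τ (n - 2) _ _ hx hG'
  simp only [one_mul] at hbend
  rw [beamSpatialOp, hbend.deriv.deriv_eq, htens.deriv_eq,
    (deriv_affinePowSum_eventuallyEq _ _ hx).deriv_eq, (hasDerivAt_affinePowSum _ _ hx).deriv,
    (hasDerivAt_affinePowSum _ _ hx).deriv]
  simp only [affinePowSum, ← Finset.sum_sub_distrib]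
  refine Finset.sum_congr rfl fun i _ => ?_
  rw [show n + (q i - 1 - 1) - 1 - 1 = n + q i - 4 by ring,
    show n - 2 + (q i - 1) - 1 = n + q i - 4 by ring, beamIndicial]
  ring

end affinePowSum

theorem beamIndicial_three_sub (a1 n τ : ℝ) : beamIndicial a1 n τ (3 - n) = 0 := by
  unfold beamIndicial
  ring

theorem beamIndicial_eq_zero_of_root {a1 n τ σ q : ℝ}
    (hσ : a1 ^ 2 * σ ^ 2 = a1 ^ 2 * (n - 1) ^ 2 + 4 * τ)
    (hq : q = (3 - n + σ) / 2 ∨ q = (3 - n - σ) / 2) : beamIndicial a1 n τ q = 0 := by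
  have hfactor : a1 ^ 2 * (q - 1) * (n + q - 2) - τ = 0 := by
    rcases hq with rfl | rfl <;> linear_combination hσ / 4
  rw [beamIndicial, hfactor, mul_zero]

theorem beam_case_c_solution_general (a0 a1 n T1 Δ σ qp qm : ℝ)
    (ha1 : 0 < a1) (hn : 3 < n)
    (hΔdef : Δ = a1 ^ 3 * (n - 2) * (n - 1) ^ 2 + 4 * T1) (hΔpos : 0 < Δ)
    (hσ : σ = Real.sqrt Δ / (a1 ^ ((3 : ℝ) / 2) * Real.sqrt (n - 2)))
    (hqp : qp = (3 - n + σ) / 2) (hqm : qm = (3 - n - σ) / 2)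
    (EI T : ℝ → ℝ) (m : ℝ → ℝ)
    (hEI : ∀ x, EI x = (a0 + a1 * x) ^ n)
    (hT : ∀ x, T x = T1 * (a0 + a1 * x) ^ (n - 2) / (a1 * (n - 2)))
    (c1 c2 c3 : ℝ) (u : ℝ → ℝ → ℝ)
    (hu : ∀ x t, u x t = 2 * t + c1 * (a0 + a1 * x) ^ qp
        + c2 * (a0 + a1 * x) ^ qm + c3 * (a0 + a1 * x) ^ (3 - n)) :
    ∀ x : ℝ, a0 + a1 * x > 0 → ∀ t : ℝ, beamLHS EI m T u x t = 0 := by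
  intro x hx t
  have hn2 : 0 < n - 2 := by linarith
  have hσsq : a1 ^ 2 * σ ^ 2 = a1 ^ 2 * (n - 1) ^ 2 + 4 * (T1 / (a1 * (n - 2))) := by
    have ha1_rpow : (a1 ^ ((3 : ℝ) / 2)) ^ 2 = a1 ^ 3 := by
      rw [← Real.rpow_mul_natCast ha1.le]
      norm_num
    rw [hσ, div_pow, mul_pow, ha1_rpow, Real.sq_sqrt hΔpos.le, Real.sq_sqrt hn2.le, hΔdef]
    field_simp
  have hu' : u = fun y s => 2 * s + affinePowSum a0 a1 ![c1, c2, c3] ![qp, qm, 3 - n] y := by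
    funext y s
    simp only [hu, affinePowSum, Fin.sum_univ_three, Matrix.cons_val_zero, Matrix.cons_val_one,
      Matrix.cons_val]
    ring
  have hEI' : EI = fun y => (a0 + a1 * y) ^ n := funext hEI
  have hT' : T = fun y => T1 / (a1 * (n - 2)) * (a0 + a1 * y) ^ (n - 2) :=
    funext fun y => by rw [hT]; ring
  rw [hu', hEI', hT', beamLHS_add_linear_time, beamSpatialOp_affinePowSum _ _ _ _ hx]
  simp [affinePowSum, Fin.sum_univ_three, beamIndicial_three_sub,
    beamIndicial_eq_zero_of_root hσsq (Or.inl hqp), beamIndicial_eq_zero_of_root hσsq (Or.inr hqm)]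

/-- Case (c) of Table 1 (solution `u = 2t + G(x)`, eq. (22) of the paper): with
`EI(x) = (a0 + a1x)^n`, `T(x) = T1(a0 + a1x)^{n−2}/(a1(n−2))`, `a1 > 0`, `n > 3`,
`Δ = a1³(n−2)(n−1)² + 4T1 > 0`, `σ = √Δ/(a1^{3/2}√(n−2))`, `q± = (3 − n ± σ)/2`,
and any continuous mass `m`, the function
`u(x,t) = 2t + c1(a0+a1x)^{q+} + c2(a0+a1x)^{q−} + c3(a0+a1x)^{3−n}` satisfies the
axially loaded beam equation wherever `a0 + a1x > 0`. -/
theorem beam_case_c_solution (a0 a1 n T1 Δ σ qp qm : ℝ)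
    (ha1 : 0 < a1) (hn : 3 < n)
    (hΔdef : Δ = a1 ^ 3 * (n - 2) * (n - 1) ^ 2 + 4 * T1) (hΔpos : 0 < Δ)
    (hσ : σ = Real.sqrt Δ / (a1 ^ ((3 : ℝ) / 2) * Real.sqrt (n - 2)))
    (hqp : qp = (3 - n + σ) / 2) (hqm : qm = (3 - n - σ) / 2)
    (EI T : ℝ → ℝ) (m : ℝ → ℝ) (hm : Continuous m)
    (hEI : ∀ x, EI x = (a0 + a1 * x) ^ n)
    (hT : ∀ x, T x = T1 * (a0 + a1 * x) ^ (n - 2) / (a1 * (n - 2)))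
    (c1 c2 c3 : ℝ) (u : ℝ → ℝ → ℝ)
    (hu : ∀ x t, u x t = 2 * t + c1 * (a0 + a1 * x) ^ qp
        + c2 * (a0 + a1 * x) ^ qm + c3 * (a0 + a1 * x) ^ (3 - n)) :
    ∀ x : ℝ, a0 + a1 * x > 0 → ∀ t : ℝ, beamLHS EI m T u x t = 0 :=
  beam_case_c_solution_general a0 a1 n T1 Δ σ qp qm ha1 hn hΔdef hΔpos hσ hqp hqm EI T m hEI hT c1
    c2 c3 u hu
end

section
/- Let EI: (α,β) → (0,∞) be three times differentiable and let f0 be a real number. Define ξ(x) = f0·(EI(x))^{1/3}. Then for every x ∈ (α,β), −2·ξ(x)·(EI'(x))²/EI(x) + 2·ξ(x)·EI''(x) + 2·EI'(x)·ξ'(x) − 6·EI(x)·ξ''(x) = 0. (This shows that ξ = f0·EI^{1/3} solves the determining equation (12) of the Lie symmetry analysis in the case where the coefficient of u in the infinitesimal η is constant, so that ∂²η/∂x∂u = 0.) -/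
/-! With `ξ = f0·E^p` one has `ξ' = f0·p·E^(p-1)·E'` and
`ξ'' = f0·p·((p-1)·E^(p-2)·E'² + E^(p-1)·E'')`. For `p = 1/3`, writing `E^(p-1) = E^p / E` and
`E^(p-2) = E^p / E²` turns the determining equation into a rational identity in `E, E', E'', E^p`,
which holds because `6·p·(p-1) = -4/3 = -2 + 2·p` and `6·p = 2`. -/

section RpowDeriv

variable {E : ℝ → ℝ} (c p : ℝ)

theorem deriv_const_mul_rpow {x : ℝ} (hE : E x ≠ 0) (hdiff : DifferentiableAt ℝ E x) :
    deriv (fun y => c * E y ^ p) x = c * p * E x ^ (p - 1) * deriv E x := by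
  rw [deriv_const_mul _ (hdiff.rpow_const (Or.inl hE)), deriv_rpow_const hdiff (Or.inl hE)]
  ring

theorem deriv_deriv_const_mul_rpow {U : Set ℝ} (hU : IsOpen U) (hne : ∀ x ∈ U, E x ≠ 0)
    (hdiff : ∀ x ∈ U, DifferentiableAt ℝ E x) {x : ℝ} (hx : x ∈ U)
    (hdiff2 : DifferentiableAt ℝ (deriv E) x) :
    deriv (deriv fun y => c * E y ^ p) x =
      c * p * ((p - 1) * E x ^ (p - 2) * deriv E x ^ 2 + E x ^ (p - 1) * deriv (deriv E) x) := by
  have hfirst : deriv (fun y => c * E y ^ p) =ᶠ[nhds x]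
      fun y => c * p * E y ^ (p - 1) * deriv E y :=
    Filter.eventuallyEq_of_mem (hU.mem_nhds hx)
      fun y hy => deriv_const_mul_rpow c p (hne y hy) (hdiff y hy)
  have hE := hne x hx
  rw [hfirst.deriv_eq,
    deriv_fun_mul (((hdiff x hx).rpow_const (Or.inl hE)).const_mul _) hdiff2,
    deriv_const_mul_rpow _ _ hE (hdiff x hx), show p - 1 - 1 = p - 2 by ring]
  ring

end RpowDeriv

theorem xi_cube_root_solves_determining_equation_general (α β f0 : ℝ) (EI ξ : ℝ → ℝ)
    (hpos : ∀ x ∈ Set.Ioo α β, 0 < EI x)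
    (hd1 : ∀ x ∈ Set.Ioo α β, DifferentiableAt ℝ EI x)
    (hd2 : ∀ x ∈ Set.Ioo α β, DifferentiableAt ℝ (deriv EI) x)
    (hξ : ∀ x, ξ x = f0 * EI x ^ ((1 : ℝ) / 3)) :
    ∀ x ∈ Set.Ioo α β,
      -2 * ξ x * (deriv EI x) ^ 2 / EI x + 2 * ξ x * deriv (deriv EI) x
        + 2 * deriv EI x * deriv ξ x - 6 * EI x * deriv (deriv ξ) x = 0 := by
  obtain rfl : ξ = fun y => f0 * EI y ^ ((1 : ℝ) / 3) := funext hξ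
  intro x hx
  have hE := hpos x hx
  rw [deriv_const_mul_rpow f0 _ hE.ne' (hd1 x hx),
    deriv_deriv_const_mul_rpow f0 _ isOpen_Ioo (fun y hy => (hpos y hy).ne') hd1 hx (hd2 x hx),
    Real.rpow_sub_one hE.ne', Real.rpow_sub hE _ 2, Real.rpow_two]
  field_simp
  ring

/-- The infinitesimal `ξ = f0·EI^{1/3}` solves the determining equation (12) of the
Lie symmetry analysis of the axially loaded beam, in the case where the coefficient
of `u` in the infinitesimal `η` is constant (so `∂²η/∂x∂u = 0`): for `EI` positive
and three times differentiable on `(α, β)`,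
`−2ξ(EI')²/EI + 2ξ·EI'' + 2EI'·ξ' − 6EI·ξ'' = 0` on `(α, β)`. -/
theorem xi_cube_root_solves_determining_equation (α β f0 : ℝ) (EI ξ : ℝ → ℝ)
    (hpos : ∀ x ∈ Set.Ioo α β, 0 < EI x)
    (hd1 : ∀ x ∈ Set.Ioo α β, DifferentiableAt ℝ EI x)
    (hd2 : ∀ x ∈ Set.Ioo α β, DifferentiableAt ℝ (deriv EI) x)
    (hd3 : ∀ x ∈ Set.Ioo α β, DifferentiableAt ℝ (deriv (deriv EI)) x)
    (hξ : ∀ x, ξ x = f0 * EI x ^ ((1 : ℝ) / 3)) :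
    ∀ x ∈ Set.Ioo α β,
      -2 * ξ x * (deriv EI x) ^ 2 / EI x + 2 * ξ x * deriv (deriv EI) x
        + 2 * deriv EI x * deriv ξ x - 6 * EI x * deriv (deriv ξ) x = 0 :=
  xi_cube_root_solves_determining_equation_general α β f0 EI ξ hpos hd1 hd2 hξ
end

section
/- There exist real numbers m1 and m2 such that, setting W(x) = x + m1·x²/2 + m2·x³/3 and m(x) = 1 + m1·x + m2·x² (so m = W'), one has: (i) m(x) > 0 for all x ∈ [0,1]; (ii) W'(1)² + W(1)·W''(1) = 0, i.e. the second derivative of W² vanishes at x = 1; and (iii) 3·W'(1)·W''(1) + 2·W(1)·m2 = 0, i.e. the third derivative of W² vanishes at x = 1. Consequently every function of the form u(x,t) = W(x)²·F(t) satisfies the cantilever boundary conditions u(0,t) = 0, u_x(0,t) = 0 at the fixed end and the free-end boundary conditions u_xx(1,t) = 0, u_xxx(1,t) = 0. (The paper gives the explicit choice m1 ≈ −0.840295 and m2 ≈ 0.277816 for m0 = 1.) -/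
/-! Writing `a = W'(1)`, `b = W''(1)`, `w = W(1)`, the two free-end equations are
`E₁ : a² + w b = 0` and `E₂ : 3 a b + 2 w m2 = 0`. Their combination `E₂ - 2 E₁` is linear
in `m1`, giving `m1 (10 m2 - 9) = 6 - 10 m2²`; substituting back turns `E₁` into the quartic
`50 m2⁴ - 300 m2³ + 585 m2² - 432 m2 + 81 = 0`, which changes sign on `[0.27, 0.28]`.
The resulting `m1 ≈ -0.84` lies in `(-1, 0)`, and with `m2 > 0` this keeps `W' = m` positive
on `[0, 1]`. The boundary conditions follow from `(W²)'' = 2(W'² + W W'')` and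
`(W²)''' = 2(3 W' W'' + W W''')`. -/

section SquareDerivatives

variable {f f' f'' f''' : ℝ → ℝ} (c : ℝ)

lemma deriv_sq_mul_const (hf : ∀ x, HasDerivAt f (f' x) x) :
    deriv (fun x => f x ^ 2 * c) = fun x => 2 * f x * f' x * c := by
  funext x
  exact ((((hf x).pow 2).mul_const c).congr_deriv
    (by simp only [Nat.cast_ofNat, Nat.add_one_sub_one, pow_one])).deriv

lemma deriv_deriv_sq_mul_const (hf : ∀ x, HasDerivAt f (f' x) x)
    (hf' : ∀ x, HasDerivAt f' (f'' x) x) :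
    deriv (deriv (fun x => f x ^ 2 * c)) = fun x => 2 * (f' x ^ 2 + f x * f'' x) * c := by
  rw [deriv_sq_mul_const c hf]
  funext x
  exact (((((hf x).const_mul 2).mul (hf' x)).mul_const c).congr_deriv (by ring)).deriv

lemma deriv_deriv_deriv_sq_mul_const (hf : ∀ x, HasDerivAt f (f' x) x)
    (hf' : ∀ x, HasDerivAt f' (f'' x) x) (hf'' : ∀ x, HasDerivAt f'' (f''' x) x) :
    deriv (deriv (deriv (fun x => f x ^ 2 * c))) =
      fun x => 2 * (3 * f' x * f'' x + f x * f''' x) * c := by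
  rw [deriv_deriv_sq_mul_const c hf hf']
  funext x
  exact ((((((hf' x).pow 2).add ((hf x).mul (hf'' x))).const_mul 2).mul_const c).congr_deriv
    (by simp only [Nat.cast_ofNat, Nat.add_one_sub_one, pow_one]; ring)).deriv

end SquareDerivatives

lemma hasDerivAt_cubic (a b c d x : ℝ) :
    HasDerivAt (fun x => a + b * x + c * x ^ 2 + d * x ^ 3) (b + 2 * c * x + 3 * d * x ^ 2) x :=
  ((((hasDerivAt_const x a).add ((hasDerivAt_id x).const_mul b)).add
    ((hasDerivAt_pow 2 x).const_mul c)).add ((hasDerivAt_pow 3 x).const_mul d)).congr_deriv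
    (by simp only [Nat.cast_ofNat, Nat.add_one_sub_one, pow_one]; ring)

lemma quadratic_pos_of_mem_Icc {m1 m2 x : ℝ} (hm1 : -1 < m1) (hm2 : 0 ≤ m2)
    (hx : x ∈ Set.Icc (0 : ℝ) 1) : 0 < 1 + m1 * x + m2 * x ^ 2 := by
  obtain ⟨hx0, hx1⟩ := hx
  have hlin : 0 < 1 + m1 * x := by
    rcases le_or_gt 0 m1 with h | h
    · nlinarith
    · nlinarith [mul_nonneg (sub_nonneg.2 hx1) (neg_nonneg.2 h.le)]
  nlinarith [mul_nonneg hm2 (sq_nonneg x)]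

lemma exists_quartic_root :
    ∃ y ∈ Set.Icc (0.27 : ℝ) 0.28,
      50 * y ^ 4 - 300 * y ^ 3 + 585 * y ^ 2 - 432 * y + 81 = 0 := by
  refine intermediate_value_Icc' (by norm_num) (Continuous.continuousOn (by fun_prop)) ?_
  constructor <;> norm_num

lemma free_end_equations_of_quartic_root {m1 m2 : ℝ}
    (hq : 50 * m2 ^ 4 - 300 * m2 ^ 3 + 585 * m2 ^ 2 - 432 * m2 + 81 = 0)
    (hD : 10 * m2 - 9 ≠ 0) (hm1 : m1 * (10 * m2 - 9) = 6 - 10 * m2 ^ 2) :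
    (1 + m1 + m2) ^ 2 + (1 + m1 / 2 + m2 / 3) * (m1 + 2 * m2) = 0
      ∧ 3 * (1 + m1 + m2) * (m1 + 2 * m2) + 2 * (1 + m1 / 2 + m2 / 3) * m2 = 0 := by
  have h1 : (1 + m1 + m2) ^ 2 + (1 + m1 / 2 + m2 / 3) * (m1 + 2 * m2) = 0 := by
    refine (mul_eq_zero.mp ?_).resolve_left (pow_ne_zero 2 hD)
    linear_combination
      (3 / 2 * (m1 * (10 * m2 - 9) + 6 - 10 * m2 ^ 2) + (100 * m2 ^ 2 - 81) / 3) * hm1 - hq / 3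
  exact ⟨h1, by linear_combination 2 * h1 + hm1 / 3⟩

/-- There exist `m1, m2` (for `m0 = 1`) such that, with
`W(x) = x + m1x²/2 + m2x³/3` and `m(x) = 1 + m1x + m2x² = W'(x)`:
(i) `m > 0` on `[0,1]`; (ii) `W'(1)² + W(1)W''(1) = 0` ((W²)''(1) = 0);
(iii) `3W'(1)W''(1) + 2W(1)m2 = 0` ((W²)'''(1) = 0); and consequently every
`u(x,t) = W(x)²·F(t)` satisfies the cantilever conditions `u(0,t) = 0`,
`u_x(0,t) = 0` and the free-end conditions `u_xx(1,t) = 0`, `u_xxx(1,t) = 0`.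
(The paper: `m1 ≈ −0.840295`, `m2 ≈ 0.277816`.) -/
theorem cantilever_free_end_coefficients_exist :
    ∃ m1 m2 : ℝ,
      (∀ x ∈ Set.Icc (0 : ℝ) 1, 0 < 1 + m1 * x + m2 * x ^ 2)
      ∧ (1 + m1 + m2) ^ 2 + (1 + m1 / 2 + m2 / 3) * (m1 + 2 * m2) = 0
      ∧ 3 * (1 + m1 + m2) * (m1 + 2 * m2) + 2 * (1 + m1 / 2 + m2 / 3) * m2 = 0
      ∧ (∀ F : ℝ → ℝ, ∀ t : ℝ,
          (fun x : ℝ => (x + m1 * x ^ 2 / 2 + m2 * x ^ 3 / 3) ^ 2 * F t) 0 = 0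
          ∧ deriv (fun x : ℝ =>
              (x + m1 * x ^ 2 / 2 + m2 * x ^ 3 / 3) ^ 2 * F t) 0 = 0
          ∧ deriv (deriv (fun x : ℝ =>
              (x + m1 * x ^ 2 / 2 + m2 * x ^ 3 / 3) ^ 2 * F t)) 1 = 0
          ∧ deriv (deriv (deriv (fun x : ℝ =>
              (x + m1 * x ^ 2 / 2 + m2 * x ^ 3 / 3) ^ 2 * F t))) 1 = 0) := by
  obtain ⟨m2, ⟨hm2_lo, hm2_hi⟩, hq⟩ := exists_quartic_root
  have hD : 10 * m2 - 9 < 0 := by linarith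
  set m1 := (6 - 10 * m2 ^ 2) / (10 * m2 - 9)
  have hm1 : m1 * (10 * m2 - 9) = 6 - 10 * m2 ^ 2 := div_mul_cancel₀ _ hD.ne
  have hm1_gt : -1 < m1 := by rw [lt_div_iff_of_neg hD]; nlinarith
  obtain ⟨h1, h2⟩ := free_end_equations_of_quartic_root hq hD.ne hm1
  have hW (x : ℝ) : HasDerivAt (fun x => x + m1 * x ^ 2 / 2 + m2 * x ^ 3 / 3)
      (1 + m1 * x + m2 * x ^ 2) x := by
    convert hasDerivAt_cubic 0 1 (m1 / 2) (m2 / 3) x using 1 <;> [funext y; skip] <;> ring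
  have hW' (x : ℝ) : HasDerivAt (fun x => 1 + m1 * x + m2 * x ^ 2) (m1 + 2 * m2 * x) x := by
    convert hasDerivAt_cubic 1 m1 m2 0 x using 1 <;> [funext y; skip] <;> ring
  have hW'' (x : ℝ) : HasDerivAt (fun x => m1 + 2 * m2 * x) (2 * m2) x := by
    convert hasDerivAt_cubic m1 (2 * m2) 0 0 x using 1 <;> [funext y; skip] <;> ring
  refine ⟨m1, m2, fun x hx => quadratic_pos_of_mem_Icc hm1_gt (by linarith) hx, h1, h2,
    fun F t => ⟨by simp, ?_, ?_, ?_⟩⟩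
  · rw [deriv_sq_mul_const _ hW]
    simp
  · rw [deriv_deriv_sq_mul_const _ hW hW']
    linear_combination 2 * F t * h1
  · rw [deriv_deriv_deriv_sq_mul_const _ hW hW' hW'']
    linear_combination 2 * F t * h2
end
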